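/- Let −1 < t < 0 and let ν be a Borel probability measure on P with dim_F ν > −t. Then for every 0 < ζ < min{1, dim_F ν + t}, the Riesz potential I_{t,ν}(x) := ∫ d_P(x,y)^t dν(y) is finite for every x ∈ P and defines a ζ-Hölder continuous function on P. -/

import Mathlib

open MeasureTheory Filter Topology
open scoped ENNReal

noncomputable section

abbrev SL2 : Type := Matrix.SpecialLinearGroup (Fin 2) ℝ
abbrev V2 : Type := EuclideanSpace ℝ (Fin 2)
abbrev P1 : Type := Projectivization ℝ V2

instance : TopologicalSpace SL2 :=
  inferInstanceAs (TopologicalSpace {A : Matrix (Fin 2) (Fin 2) ℝ // A.det = 1})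
instance : MeasurableSpace SL2 := borel SL2
instance : BorelSpace SL2 := ⟨rfl⟩
instance : TopologicalSpace P1 :=
  inferInstanceAs (TopologicalSpace (Quotient (projectivizationSetoid ℝ V2)))
instance : MeasurableSpace P1 := borel P1
instance : BorelSpace P1 := ⟨rfl⟩

def gnorm (g : SL2) : ℝ := ‖Matrix.toEuclideanCLM (𝕜 := ℝ) (g : Matrix (Fin 2) (Fin 2) ℝ)‖

def gvec (g : SL2) (u : V2) : V2 :=
  Matrix.toEuclideanCLM (𝕜 := ℝ) (g : Matrix (Fin 2) (Fin 2) ℝ) u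

lemma gvec_mul (g h : SL2) (u : V2) : gvec g (gvec h u) = gvec (g * h) u := by
  simp [gvec, Matrix.SpecialLinearGroup.coe_mul, map_mul, ContinuousLinearMap.mul_apply]

lemma gvec_one (u : V2) : gvec 1 u = u := by
  simp [gvec]

lemma gvec_ne_zero (g : SL2) {u : V2} (hu : u ≠ 0) : gvec g u ≠ 0 := by
  intro h
  apply hu
  have h2 := congrArg (gvec g⁻¹) h
  rw [gvec_mul, inv_mul_cancel, gvec_one] at h2
  rw [h2]
  simp [gvec]

def pact (g : SL2) (x : P1) : P1 :=
  Projectivization.mk ℝ (gvec g x.rep) (gvec_ne_zero g x.rep_nonzero)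

def dP (x y : P1) : ℝ :=
  |x.rep 0 * y.rep 1 - x.rep 1 * y.rep 0| / (‖x.rep‖ * ‖y.rep‖)

def gxnorm (g : SL2) (x : P1) : ℝ := ‖gvec g x.rep‖ / ‖x.rep‖

def pInner (x y : P1) : ℝ := |(inner ℝ x.rep y.rep : ℝ)| / (‖x.rep‖ * ‖y.rep‖)

/-- The (topological) support of a measure. -/
def msupp (μ : Measure SL2) : Set SL2 :=
  {g | ∀ U : Set SL2, IsOpen U → g ∈ U → 0 < μ U}

def IsCompactlySupported (μ : Measure SL2) : Prop :=
  ∃ K : Set SL2, IsCompact K ∧ μ Kᶜ = 0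

/-- The closed semigroup generated by the support of `μ`. -/
def Smu (μ : Measure SL2) : Set SL2 :=
  closure ((Subsemigroup.closure (msupp μ) : Subsemigroup SL2) : Set SL2)

def StronglyIrreducible (μ : Measure SL2) : Prop :=
  ¬ ∃ F : Finset P1, F.Nonempty ∧ ∀ g ∈ Smu μ, ∀ x ∈ F, pact g x ∈ F

def Proximal (μ : Measure SL2) : Prop :=
  ∃ g ∈ Smu μ, 2 < |Matrix.trace (g : Matrix (Fin 2) (Fin 2) ℝ)|

def SIP (μ : Measure SL2) : Prop := StronglyIrreducible μ ∧ Proximal μ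

/-- `convPow μ n` is the `n`-th convolution power `μⁿ`. -/
def convPow (μ : Measure SL2) : ℕ → Measure SL2
  | 0 => Measure.dirac 1
  | n + 1 => Measure.map (fun p : SL2 × SL2 => p.1 * p.2) ((convPow μ n).prod μ)

def IsOmegaMinus (ω : SL2 → P1) : Prop :=
  ∀ g : SL2, 1 < gnorm g → gxnorm g (ω g) = (gnorm g)⁻¹

def IsUpsilonPlus (υ : SL2 → P1) : Prop :=
  ∀ g : SL2, 1 < gnorm g⁻¹ → gxnorm g⁻¹ (υ g) = (gnorm g⁻¹)⁻¹

def Eball (α ε : ℝ) (n : ℕ) : Set SL2 :=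
  {g | |(n : ℝ)⁻¹ * Real.log (gnorm g) - α| ≤ ε}

def Egam (ω : SL2 → P1) (γ α ε : ℝ) (n : ℕ) (x : P1) : Set SL2 :=
  {g | g ∈ Eball α ε n ∧ dP x (ω g) ≤ Real.exp (-(n : ℝ) * (γ - ε) * α)}

def EgamStar (υ : SL2 → P1) (α ε : ℝ) (n : ℕ) (x : P1) : Set SL2 :=
  {g | g ∈ Eball α ε n ∧ dP x (υ g) ≤ Real.exp (-(n : ℝ) * (2 - ε) * α)}

def Etilde (ω : SL2 → P1) (γ α ε : ℝ) (n : ℕ) (x : P1) : Set SL2 :=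
  if γ < 2 then
    {g | g ∈ Eball α ε n ∧ Real.exp (-(n : ℝ) * (γ + ε) * α) ≤ dP x (ω g) ∧
      dP x (ω g) ≤ Real.exp (-(n : ℝ) * (γ - ε) * α)}
  else Egam ω 2 α ε n x

def IfinN (μ : Measure SL2) (ω : SL2 → P1) (γ α ε : ℝ) (n : ℕ) : EReal :=
  (((n : ℝ)⁻¹ : ℝ) : EReal) * ENNReal.log (⨆ x : P1, convPow μ n (Egam ω γ α ε n x))

def Ieps (μ : Measure SL2) (ω : SL2 → P1) (γ α ε : ℝ) : EReal :=
  Filter.atTop.limsup (fun n => IfinN μ ω γ α ε n)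

def Ifinal (μ : Measure SL2) (ω : SL2 → P1) (γ α : ℝ) : EReal :=
  ⨅ (ε : ℝ) (_ : 0 < ε), Ieps μ ω γ α ε

def Aset (μ : Measure SL2) (ω : SL2 → P1) : Set ℝ :=
  {α : ℝ | Ifinal μ ω 0 α ≠ ⊥}

def I2starEps (μ : Measure SL2) (υ : SL2 → P1) (α ε : ℝ) : EReal :=
  Filter.atTop.limsup (fun n : ℕ =>
    (((n : ℝ)⁻¹ : ℝ) : EReal) * ENNReal.log (⨆ x : P1, convPow μ n (EgamStar υ α ε n x)))

def I2star (μ : Measure SL2) (υ : SL2 → P1) (α : ℝ) : EReal :=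
  ⨅ (ε : ℝ) (_ : 0 < ε), I2starEps μ υ α ε

def kSeq (μ : Measure SL2) (t : ℝ) (n : ℕ) : ℝ :=
  (n : ℝ)⁻¹ * Real.log (∫ g, gnorm g ^ t ∂ convPow μ n)

/-- `k : ℝ → ℝ` is the limit defining `k(t)`. -/
def KTendsto (μ : Measure SL2) (k : ℝ → ℝ) : Prop :=
  ∀ t : ℝ, Filter.Tendsto (fun n => kSeq μ t n) Filter.atTop (nhds (k t))

def kplusSeq (μ : Measure SL2) (t : ℝ) (n : ℕ) : ℝ :=
  (n : ℝ)⁻¹ * Real.log (⨆ x : P1, ∫ g, gxnorm g x ^ t ∂ convPow μ n)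

def kplus (μ : Measure SL2) (t : ℝ) : ℝ :=
  Filter.atTop.limsup (fun n => kplusSeq μ t n)

def sup2 (μ : Measure SL2) (ω : SL2 → P1) (t : ℝ) : EReal :=
  ⨆ α ∈ Aset μ ω, (Ifinal μ ω 2 α + ((-(t * α) : ℝ) : EReal))

def tc (μ : Measure SL2) (ω : SL2 → P1) (k : ℝ → ℝ) : ℝ :=
  sInf {t : ℝ | sup2 μ ω t < ((k t : ℝ) : EReal)}

def zetat (μ : Measure SL2) (ω : SL2 → P1) (k : ℝ → ℝ) (t : ℝ) : ℝ :=
  sSup {ζ : ℝ |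
    (⨆ α ∈ Aset μ ω, (Ifinal μ ω 2 α + ((-(t * α) + 2 * ζ * α : ℝ) : EReal)))
      < ((k t : ℝ) : EReal)}

def Pt (μ : Measure SL2) (t : ℝ) (ψ : P1 → ℝ) : P1 → ℝ :=
  fun x => ∫ g, gxnorm g x ^ t * ψ (pact g x) ∂μ

def sl2transpose (g : SL2) : SL2 :=
  ⟨Matrix.transpose (g : Matrix (Fin 2) (Fin 2) ℝ), by rw [Matrix.det_transpose]; exact g.2⟩

def PtStar (μ : Measure SL2) (t : ℝ) (ψ : P1 → ℝ) : P1 → ℝ :=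
  fun w => ∫ g, gxnorm (sl2transpose g) w ^ t * ψ (pact (sl2transpose g) w) ∂μ

def BoundedFn (f : P1 → ℝ) : Prop := ∃ M : ℝ, ∀ x, |f x| ≤ M

def IsEigenMeas (μ : Measure SL2) (t : ℝ) (ν : Measure P1) (c : ℝ) : Prop :=
  ∀ f : P1 → ℝ, Measurable f → BoundedFn f →
    ∫ x, Pt μ t f x ∂ν = c * ∫ x, f x ∂ν

def IsEigenMeasStar (μ : Measure SL2) (t : ℝ) (ν : Measure P1) (c : ℝ) : Prop :=
  ∀ f : P1 → ℝ, Measurable f → BoundedFn f →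
    ∫ x, PtStar μ t f x ∂ν = c * ∫ x, f x ∂ν

def IsFurstenberg (μ : Measure SL2) (ν : Measure P1) : Prop :=
  IsProbabilityMeasure ν ∧ ∀ f : P1 → ℝ, Measurable f → BoundedFn f →
    ∫ g, (∫ x, f (pact g x) ∂ν) ∂μ = ∫ x, f x ∂ν

def HolderWithC (C ζ : ℝ) (f : P1 → ℝ) : Prop :=
  ∀ x y : P1, |f x - f y| ≤ C * dP x y ^ ζ

def HolderFn (ζ : ℝ) (f : P1 → ℝ) : Prop := ∃ C : ℝ, HolderWithC C ζ f

def hSemi (ζ : ℝ) (f : P1 → ℝ) : ℝ :=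
  sSup {c : ℝ | ∃ x y : P1, x ≠ y ∧ c = |f x - f y| / dP x y ^ ζ}

def supNorm (f : P1 → ℝ) : ℝ := ⨆ x : P1, |f x|

def hNorm (ζ : ℝ) (f : P1 → ℝ) : ℝ := hSemi ζ f + supNorm f

def frostman (ν : Measure P1) : ℝ :=
  sSup {s : ℝ | 0 ≤ s ∧ ∃ C : ℝ, 0 < C ∧
    ∀ x : P1, ∀ r : ℝ, 0 < r → (ν {y | dP x y ≤ r}).toReal ≤ C * r ^ s}

def rotSL (θ : ℝ) : SL2 :=
  ⟨!![Real.cos θ, -Real.sin θ; Real.sin θ, Real.cos θ], by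
    simp [Matrix.det_fin_two_of]
    ring_nf
    rw [← Real.sin_sq_add_cos_sq θ]
    ring⟩

def IsRotInvariant (lam : Measure P1) : Prop :=
  IsProbabilityMeasure lam ∧ ∀ θ : ℝ, Measure.map (pact (rotSL θ)) lam = lam

def riesz (t : ℝ) (ν : Measure P1) (x : P1) : ℝ≥0∞ :=
  ∫⁻ y, ENNReal.ofReal (dP x y) ^ t ∂ν

/-!
Fix `s` with `ζ - t < s < min (dim_F ν) (1 - t)`, so that `ν (B(x, r)) ≤ C r ^ s`. Summing over
dyadic shells around `x` gives `∫_{B(x, r)} d(x, ·) ^ t dν ≲ r ^ (s + t)` (as `s + t > 0`) and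
`∫_{d(x, ·) > δ} d(x, ·) ^ (t - 1) dν ≲ δ ^ (s + t - 1)` (as `s + t < 1`). For `δ = d(x, x')`, the
tangent line of the convex function `r ↦ r ^ t` and the triangle inequality give
`d(x, y) ^ t ≤ d(x', y) ^ t - t δ d(x, y) ^ (t - 1)` outside `B(x, δ)`; integrating,
`I(x) ≤ I(x') + B δ ^ (s + t) ≤ I(x') + B δ ^ ζ`.
-/

theorem add_mul_rpow_sub_one_mul_sub_le_rpow {t a b : ℝ} (ht : t ≤ 0) (ha : 0 < a) (hb : 0 < b) :
    b ^ t + t * b ^ (t - 1) * (a - b) ≤ a ^ t := by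
  have bernoulli : 1 + (1 - t) * (b / a - 1) ≤ (b / a) ^ (1 - t) := by
    simpa using one_add_mul_self_le_rpow_one_add (s := b / a - 1)
      (by linarith [div_pos hb ha]) (p := 1 - t) (by linarith)
  calc b ^ t + t * b ^ (t - 1) * (a - b) = a * b ^ (t - 1) * (1 + (1 - t) * (b / a - 1)) := by
        rw [Real.rpow_sub_one hb.ne']
        field_simp
        ring
    _ ≤ a * b ^ (t - 1) * (b / a) ^ (1 - t) :=
        mul_le_mul_of_nonneg_left bernoulli (mul_pos ha (Real.rpow_pos_of_pos hb _)).le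
    _ = a ^ t := by
        rw [Real.rpow_sub (div_pos hb ha), Real.rpow_one, Real.div_rpow hb.le ha.le,
          Real.rpow_sub_one hb.ne']
        field_simp

theorem ofReal_rpow_le_ofReal_rpow_add {t a b δ : ℝ} (ht : t < 0) (ha : 0 ≤ a) (hb : 0 < b)
    (hδ : 0 ≤ δ) (hab : a ≤ b + δ) :
    ENNReal.ofReal b ^ t ≤
      ENNReal.ofReal a ^ t + ENNReal.ofReal (-t * δ) * ENNReal.ofReal b ^ (t - 1) := by
  rcases ha.eq_or_lt with rfl | ha
  · simp [ENNReal.zero_rpow_of_neg ht]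
  have tangent := add_mul_rpow_sub_one_mul_sub_le_rpow ht.le ha hb
  have hslope : -t * b ^ (t - 1) * (a - b) ≤ -t * b ^ (t - 1) * δ :=
    mul_le_mul_of_nonneg_left (by linarith)
      (mul_nonneg (by linarith) (Real.rpow_pos_of_pos hb _).le)
  calc ENNReal.ofReal b ^ t = ENNReal.ofReal (b ^ t) := ENNReal.ofReal_rpow_of_pos hb
    _ ≤ ENNReal.ofReal (a ^ t + -t * δ * b ^ (t - 1)) := ENNReal.ofReal_le_ofReal (by linarith)
    _ ≤ ENNReal.ofReal (a ^ t) + ENNReal.ofReal (-t * δ * b ^ (t - 1)) := ENNReal.ofReal_add_le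
    _ = _ := by
        rw [ENNReal.ofReal_mul (by nlinarith), ENNReal.ofReal_rpow_of_pos ha,
          ENNReal.ofReal_rpow_of_pos hb]

theorem tsum_ofReal_mul_geometric_rpow {K r q a : ℝ} (hK : 0 ≤ K) (hr : 0 < r) (hq : 0 < q)
    (hqa : q ^ a < 1) :
    ∑' n : ℕ, ENNReal.ofReal (K * (r * q ^ n) ^ a) = ENNReal.ofReal (K * r ^ a / (1 - q ^ a)) := by
  have hterm : ∀ n : ℕ, K * (r * q ^ n) ^ a = K * r ^ a * (q ^ a) ^ n := fun n => by
    rw [Real.mul_rpow hr.le (by positivity), Real.rpow_pow_comm hq.le, mul_assoc]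
  have hqa0 : 0 ≤ q ^ a := Real.rpow_nonneg hq.le a
  simp_rw [hterm]
  rw [← ENNReal.ofReal_tsum_of_nonneg (fun n => by positivity)
      ((summable_geometric_of_lt_one hqa0 hqa).mul_left _),
    tsum_mul_left, tsum_geometric_of_lt_one hqa0 hqa, div_eq_mul_inv]

theorem abs_toReal_sub_toReal_le {a b : ℝ≥0∞} {c : ℝ} (ha : a ≠ ⊤) (hb : b ≠ ⊤) (hc : 0 ≤ c)
    (hab : a ≤ b + ENNReal.ofReal c) (hba : b ≤ a + ENNReal.ofReal c) :
    |a.toReal - b.toReal| ≤ c := by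
  have key : ∀ {a b : ℝ≥0∞}, b ≠ ⊤ → a ≤ b + ENNReal.ofReal c → a.toReal ≤ b.toReal + c :=
    fun hb h => by
      simpa [ENNReal.toReal_add hb ENNReal.ofReal_ne_top, hc] using
        ENNReal.toReal_mono (ENNReal.add_ne_top.2 ⟨hb, ENNReal.ofReal_ne_top⟩) h
  rw [abs_sub_le_iff]
  constructor <;> linarith [key hb hab, key ha hba]

section Dyadic

variable {α : Type*} [MeasurableSpace α] {ν : Measure α}

theorem setLIntegral_le_tsum_mul_measure {f : α → ℝ≥0∞} {S : Set α} {A : ℕ → Set α}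
    (hA : ∀ n, MeasurableSet (A n)) {c : ℕ → ℝ≥0∞} (hcover : ∀ y ∈ S, ∃ n, y ∈ A n ∧ f y ≤ c n) :
    ∫⁻ y in S, f y ∂ν ≤ ∑' n, c n * ν (A n) := by
  have hind : ∀ n, Measurable ((A n).indicator fun _ => c n) := fun n =>
    measurable_const.indicator (hA n)
  calc ∫⁻ y in S, f y ∂ν ≤ ∫⁻ y in S, ∑' n, (A n).indicator (fun _ => c n) y ∂ν := by
        refine setLIntegral_mono (Measurable.tsum hind) fun y hy => ?_
        obtain ⟨n, hyA, hfc⟩ := hcover y hy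
        exact hfc.trans (le_of_eq_of_le (Set.indicator_of_mem hyA (fun _ => c n)).symm
          (ENNReal.le_tsum n))
    _ ≤ ∫⁻ y, ∑' n, (A n).indicator (fun _ => c n) y ∂ν := setLIntegral_le_lintegral _ _
    _ = ∑' n, c n * ν (A n) := by
        rw [lintegral_tsum fun n => (hind n).aemeasurable]
        simp_rw [lintegral_indicator_const (hA _)]

variable {D : α → ℝ} {C s p : ℝ}

theorem setLIntegral_rpow_le_tsum_of_dyadic (hD : Measurable D)
    (hfro : ∀ r, 0 < r → ν {y | D y ≤ r} ≤ ENNReal.ofReal (C * r ^ s)) (hp : p ≤ 0)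
    {S : Set α} {ρ : ℕ → ℝ} (hρ : ∀ n, 0 < ρ n)
    (hcover : ∀ y ∈ S, ∃ n, ρ n / 2 ≤ D y ∧ D y ≤ ρ n) :
    ∫⁻ y in S, ENNReal.ofReal (D y) ^ p ∂ν ≤
      ∑' n, ENNReal.ofReal (C * 2 ^ (-p) * ρ n ^ (s + p)) := by
  refine (setLIntegral_le_tsum_mul_measure (A := fun n => {y | D y ≤ ρ n})
    (c := fun n => ENNReal.ofReal ((ρ n / 2) ^ p)) (fun n => hD measurableSet_Iic) ?_).trans
    (ENNReal.tsum_le_tsum fun n => ?_)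
  · intro y hy
    obtain ⟨n, hlow, hup⟩ := hcover y hy
    refine ⟨n, hup, ?_⟩
    have hpos : 0 < ρ n / 2 := half_pos (hρ n)
    rw [ENNReal.ofReal_rpow_of_pos (hpos.trans_le hlow)]
    exact ENNReal.ofReal_le_ofReal (Real.rpow_le_rpow_of_nonpos hpos hlow hp)
  · have hρn := hρ n
    calc ENNReal.ofReal ((ρ n / 2) ^ p) * ν {y | D y ≤ ρ n}
        ≤ ENNReal.ofReal ((ρ n / 2) ^ p) * ENNReal.ofReal (C * ρ n ^ s) := by
          gcongr; exact hfro _ hρn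
      _ = ENNReal.ofReal (C * 2 ^ (-p) * ρ n ^ (s + p)) := by
        rw [← ENNReal.ofReal_mul (by positivity), Real.div_rpow hρn.le zero_le_two,
          Real.rpow_add hρn, Real.rpow_neg zero_le_two]
        ring_nf

theorem measure_nonpos_eq_zero_of_frostman (hs : 0 < s)
    (hfro : ∀ r, 0 < r → ν {y | D y ≤ r} ≤ ENNReal.ofReal (C * r ^ s)) :
    ν {y | D y ≤ 0} = 0 := by
  have hlim : Tendsto (fun r : ℝ => ENNReal.ofReal (C * r ^ s)) (𝓝[>] 0) (𝓝 0) := by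
    have hcont : ContinuousAt (fun r : ℝ => C * r ^ s) 0 :=
      continuousAt_const.mul (Real.continuousAt_rpow_const _ _ (Or.inr hs.le))
    have := (ENNReal.continuous_ofReal.tendsto _).comp
      (hcont.tendsto.mono_left (nhdsWithin_le_nhds (s := Set.Ioi 0)))
    simpa [Function.comp_def, Real.zero_rpow hs.ne'] using this
  refine le_antisymm (ge_of_tendsto hlim ?_) bot_le
  filter_upwards [self_mem_nhdsWithin] with r (hr : 0 < r)
  exact (measure_mono fun y (hy : D y ≤ 0) => hy.trans hr.le).trans (hfro r hr)

theorem setLIntegral_sublevel_rpow_le (hD : Measurable D) (hC : 0 ≤ C)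
    (hfro : ∀ r, 0 < r → ν {y | D y ≤ r} ≤ ENNReal.ofReal (C * r ^ s)) (hp : p ≤ 0)
    (hsp : 0 < s + p) {r : ℝ} (hr : 0 < r) :
    ∫⁻ y in {y | D y ≤ r}, ENNReal.ofReal (D y) ^ p ∂ν ≤
      ENNReal.ofReal (C * 2 ^ (-p) / (1 - 2⁻¹ ^ (s + p)) * r ^ (s + p)) := by
  -- the integrand is `⊤` on `{D ≤ 0}`, so this null set has to be discarded first
  have hnull := measure_nonpos_eq_zero_of_frostman (by linarith) hfro
  rw [← setLIntegral_congr ((sdiff_ae_eq_self (s := {y | D y ≤ r}) (t := {y | D y ≤ 0})).2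
    (measure_mono_null Set.inter_subset_right hnull))]
  refine (setLIntegral_rpow_le_tsum_of_dyadic hD hfro hp (ρ := fun n => r * 2⁻¹ ^ n)
    (fun n => by positivity) ?_).trans_eq ?_
  · rintro y ⟨hyr, hy0⟩
    have hy0 : 0 < D y := lt_of_not_ge hy0
    obtain ⟨n, hlow, hup⟩ := exists_nat_pow_near_of_lt_one (div_pos hy0 hr)
      ((div_le_one hr).2 hyr) (by norm_num : (0 : ℝ) < 2⁻¹) (by norm_num)
    refine ⟨n, ?_, ?_⟩
    · rw [lt_div_iff₀ hr, pow_succ] at hlow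
      linarith
    · rwa [div_le_iff₀ hr, mul_comm] at hup
  · rw [tsum_ofReal_mul_geometric_rpow (by positivity) hr (by norm_num)
      (Real.rpow_lt_one (by norm_num) (by norm_num) hsp)]
    ring_nf

theorem setLIntegral_superlevel_rpow_le (hD : Measurable D) (hC : 0 ≤ C)
    (hfro : ∀ r, 0 < r → ν {y | D y ≤ r} ≤ ENNReal.ofReal (C * r ^ s)) (hp : p ≤ 0)
    (hsp : s + p < 0) {r : ℝ} (hr : 0 < r) :
    ∫⁻ y in {y | r < D y}, ENNReal.ofReal (D y) ^ p ∂ν ≤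
      ENNReal.ofReal (C * 2 ^ s / (1 - 2 ^ (s + p)) * r ^ (s + p)) := by
  refine (setLIntegral_rpow_le_tsum_of_dyadic hD hfro hp (ρ := fun n => 2 * r * 2 ^ n)
    (fun n => by positivity) ?_).trans_eq ?_
  · intro y (hy : r < D y)
    obtain ⟨n, hlow, hup⟩ := exists_nat_pow_near ((one_le_div hr).2 hy.le) one_lt_two
    refine ⟨n, ?_, ?_⟩
    · rw [le_div_iff₀ hr] at hlow
      linarith
    · rw [div_lt_iff₀ hr, pow_succ] at hup
      linarith
  · rw [tsum_ofReal_mul_geometric_rpow (by positivity) (by positivity) two_pos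
      (Real.rpow_lt_one_of_one_lt_of_neg one_lt_two hsp), Real.mul_rpow zero_le_two hr.le]
    have h2 : (2 : ℝ) ^ (-p) * 2 ^ (s + p) = 2 ^ s := by rw [← Real.rpow_add two_pos]; ring_nf
    rw [← h2]
    ring

end Dyadic

theorem norm_sq_eq_coord (u : V2) : ‖u‖ ^ 2 = u 0 ^ 2 + u 1 ^ 2 := by
  simp [EuclideanSpace.norm_sq_eq, Fin.sum_univ_two]

theorem inner_eq_coord (u v : V2) : (inner ℝ u v : ℝ) = u 0 * v 0 + u 1 * v 1 := by
  simp [PiLp.inner_apply, Fin.sum_univ_two]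
  ring

theorem abs_wedge_le (u v : V2) : |u 0 * v 1 - u 1 * v 0| ≤ ‖u‖ * ‖v‖ := by
  refine abs_le_of_sq_le_sq ?_ (by positivity)
  rw [mul_pow, norm_sq_eq_coord, norm_sq_eq_coord]
  nlinarith [sq_nonneg (u 0 * v 0 + u 1 * v 1)]

theorem dP_nonneg (x y : P1) : 0 ≤ dP x y := by
  unfold dP
  positivity

theorem dP_le_one (x y : P1) : dP x y ≤ 1 :=
  div_le_one_of_le₀ (abs_wedge_le _ _) (by positivity)

theorem dP_comm (x y : P1) : dP x y = dP y x := by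
  unfold dP
  rw [mul_comm ‖x.rep‖, abs_sub_comm]
  ring_nf

theorem dP_triangle (x y z : P1) : dP x z ≤ dP x y + dP y z := by
  set u := x.rep
  set v := y.rep
  set w := z.rep
  have hu : 0 < ‖u‖ := norm_pos_iff.2 x.rep_nonzero
  have hv : 0 < ‖v‖ := norm_pos_iff.2 y.rep_nonzero
  have hw : 0 < ‖w‖ := norm_pos_iff.2 z.rep_nonzero
  have hexpand : (u 0 * w 1 - u 1 * w 0) * ‖v‖ ^ 2 =
      (u 0 * v 1 - u 1 * v 0) * inner ℝ v w + inner ℝ u v * (v 0 * w 1 - v 1 * w 0) := by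
    rw [norm_sq_eq_coord, inner_eq_coord, inner_eq_coord]
    ring
  have hbound : |u 0 * w 1 - u 1 * w 0| * ‖v‖ ^ 2 ≤
      |u 0 * v 1 - u 1 * v 0| * (‖v‖ * ‖w‖) + ‖u‖ * ‖v‖ * |v 0 * w 1 - v 1 * w 0| := by
    rw [← abs_of_nonneg (sq_nonneg ‖v‖), ← abs_mul, hexpand]
    refine (abs_add_le _ _).trans ?_
    rw [abs_mul, abs_mul]
    gcongr
    exacts [abs_real_inner_le_norm v w, abs_real_inner_le_norm u v]
  unfold dP
  rw [div_add_div _ _ (by positivity) (by positivity),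
    div_le_div_iff₀ (by positivity) (by positivity)]
  nlinarith [mul_pos hu hw, mul_pos hu hv, abs_nonneg (u 0 * w 1 - u 1 * w 0)]

theorem continuous_dP (x : P1) : Continuous (dP x) := by
  refine (isQuotientMap_quotient_mk' (s := projectivizationSetoid ℝ V2)).continuous_iff.2 ?_
  have hmk : ∀ v : {v : V2 // v ≠ 0}, dP x (Projectivization.mk ℝ v.1 v.2) =
      |x.rep 0 * v.1 1 - x.rep 1 * v.1 0| / (‖x.rep‖ * ‖v.1‖) := by
    rintro ⟨v, hv⟩
    obtain ⟨a, ha⟩ := Projectivization.exists_smul_eq_mk_rep ℝ v hv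
    have ha0 : |(a : ℝ)| ≠ 0 := by simp
    simp only [dP, ← ha, Units.smul_def, PiLp.smul_apply, smul_eq_mul, norm_smul,
      Real.norm_eq_abs]
    rw [show x.rep 0 * (a * v 1) - x.rep 1 * (a * v 0) =
        a * (x.rep 0 * v 1 - x.rep 1 * v 0) by ring, abs_mul, mul_left_comm,
      mul_div_mul_left _ _ ha0]
  refine (continuous_congr fun v => (hmk v).symm).1 ?_
  refine Continuous.div (by fun_prop) (by fun_prop) fun v => ?_
  exact (mul_pos (norm_pos_iff.2 x.rep_nonzero) (norm_pos_iff.2 v.2)).ne'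

section Riesz

variable {ν : Measure P1} {C s : ℝ}

theorem exists_frostman_bound [IsProbabilityMeasure ν] (hs : 0 ≤ s) (h : s < frostman ν) :
    ∃ C, 0 ≤ C ∧ ∀ x r, 0 < r → ν {y | dP x y ≤ r} ≤ ENNReal.ofReal (C * r ^ s) := by
  have hne : {s : ℝ | 0 ≤ s ∧ ∃ C : ℝ, 0 < C ∧ ∀ x : P1, ∀ r : ℝ, 0 < r →
      (ν {y | dP x y ≤ r}).toReal ≤ C * r ^ s}.Nonempty := by
    by_contra hempty
    rw [frostman, Set.not_nonempty_iff_eq_empty.1 hempty, Real.sSup_empty] at h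
    linarith
  obtain ⟨s₀, ⟨-, C₀, hC₀, hfro₀⟩, hs₀⟩ := exists_lt_of_lt_csSup hne h
  refine ⟨max C₀ 1, by positivity, fun x r hr => ?_⟩
  rcases le_or_gt r 1 with hr1 | hr1
  · calc ν {y | dP x y ≤ r} = ENNReal.ofReal (ν {y | dP x y ≤ r}).toReal :=
          (ENNReal.ofReal_toReal (measure_ne_top _ _)).symm
      _ ≤ ENNReal.ofReal (max C₀ 1 * r ^ s) := by
          refine ENNReal.ofReal_le_ofReal ((hfro₀ x r hr).trans ?_)
          exact mul_le_mul (le_max_left _ _) (Real.rpow_le_rpow_of_exponent_ge hr hr1 hs₀.le)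
            (by positivity) (by positivity)
  · calc ν {y | dP x y ≤ r} ≤ 1 := prob_le_one
      _ ≤ ENNReal.ofReal (max C₀ 1 * r ^ s) := by
          rw [← ENNReal.ofReal_one]
          exact ENNReal.ofReal_le_ofReal
            (one_le_mul_of_one_le_of_one_le (le_max_right _ _) (Real.one_le_rpow hr1.le hs))

theorem measurable_ofReal_dP_rpow (x : P1) (p : ℝ) :
    Measurable fun y => ENNReal.ofReal (dP x y) ^ p :=
  (continuous_dP x).measurable.ennreal_ofReal.pow_const p

theorem riesz_ne_top {t : ℝ} (ht : t < 0) (hC : 0 ≤ C)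
    (hfro : ∀ x r, 0 < r → ν {y | dP x y ≤ r} ≤ ENNReal.ofReal (C * r ^ s)) (hst : 0 < s + t)
    (x : P1) : riesz t ν x ≠ ⊤ := by
  have hball : {y | dP x y ≤ 1} = Set.univ := Set.eq_univ_of_forall (dP_le_one x)
  have := setLIntegral_sublevel_rpow_le (continuous_dP x).measurable hC (hfro x) ht.le hst one_pos
  rw [hball, Measure.restrict_univ] at this
  exact ne_top_of_le_ne_top ENNReal.ofReal_ne_top this

theorem riesz_eq_of_dP_eq_zero (t : ℝ) {x x' : P1} (h : dP x x' = 0) :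
    riesz t ν x = riesz t ν x' := by
  refine lintegral_congr fun y => ?_
  have hsymm : dP x' x = 0 := by rw [dP_comm, h]
  have heq : dP x y = dP x' y := by linarith [dP_triangle x x' y, dP_triangle x' x y]
  rw [heq]

theorem setLIntegral_far_rpow_le_riesz_add {t : ℝ} (ht : t < 0) (x x' : P1) :
    ∫⁻ y in {y | dP x x' < dP x y}, ENNReal.ofReal (dP x y) ^ t ∂ν ≤ riesz t ν x' +
      ENNReal.ofReal (-t * dP x x') *
        ∫⁻ y in {y | dP x x' < dP x y}, ENNReal.ofReal (dP x y) ^ (t - 1) ∂ν := by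
  set F := {y | dP x x' < dP x y}
  calc ∫⁻ y in F, ENNReal.ofReal (dP x y) ^ t ∂ν
      ≤ ∫⁻ y in F, (ENNReal.ofReal (dP x' y) ^ t +
          ENNReal.ofReal (-t * dP x x') * ENNReal.ofReal (dP x y) ^ (t - 1)) ∂ν := by
        refine setLIntegral_mono ((measurable_ofReal_dP_rpow x' t).add
          (measurable_const.mul (measurable_ofReal_dP_rpow x (t - 1))))
          fun y (hy : dP x x' < dP x y) => ?_
        refine ofReal_rpow_le_ofReal_rpow_add ht (dP_nonneg x' y)
          ((dP_nonneg x x').trans_lt hy) (dP_nonneg x x') ?_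
        linarith [dP_triangle x' x y, dP_comm x x']
    _ = ∫⁻ y in F, ENNReal.ofReal (dP x' y) ^ t ∂ν +
          ENNReal.ofReal (-t * dP x x') * ∫⁻ y in F, ENNReal.ofReal (dP x y) ^ (t - 1) ∂ν := by
        rw [lintegral_add_left (measurable_ofReal_dP_rpow x' t),
          lintegral_const_mul _ (measurable_ofReal_dP_rpow x (t - 1))]
    _ ≤ _ := by gcongr; exact setLIntegral_le_lintegral _ _

theorem exists_riesz_le_riesz_add {t : ℝ} (ht : t < 0) (hC : 0 ≤ C)
    (hfro : ∀ x r, 0 < r → ν {y | dP x y ≤ r} ≤ ENNReal.ofReal (C * r ^ s))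
    (hst : 0 < s + t) (hst1 : s + t < 1) :
    ∃ B, 0 ≤ B ∧ ∀ x x', riesz t ν x ≤ riesz t ν x' + ENNReal.ofReal (B * dP x x' ^ (s + t)) := by
  set K₁ := C * 2 ^ (-t) / (1 - 2⁻¹ ^ (s + t))
  set K₂ := C * 2 ^ s / (1 - 2 ^ (s + (t - 1)))
  have hK₁ : 0 ≤ K₁ := div_nonneg (by positivity)
    (sub_nonneg.2 (Real.rpow_le_one (by norm_num) (by norm_num) hst.le))
  have hK₂ : 0 ≤ K₂ := div_nonneg (by positivity)
    (sub_nonneg.2 (Real.rpow_le_one_of_one_le_of_nonpos one_le_two (by linarith)))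
  refine ⟨K₁ + -t * K₂, by nlinarith, fun x x' => ?_⟩
  rcases (dP_nonneg x x').eq_or_lt with hδ | hδ
  · rw [riesz_eq_of_dP_eq_zero t hδ.symm]
    exact le_self_add
  set δ := dP x x'
  have hN : MeasurableSet {y | dP x y ≤ δ} := (continuous_dP x).measurable measurableSet_Iic
  have hNc : {y | dP x y ≤ δ}ᶜ = {y | δ < dP x y} := by ext; simp
  have hnear := setLIntegral_sublevel_rpow_le (continuous_dP x).measurable hC (hfro x) ht.le hst hδ
  have hfar := setLIntegral_superlevel_rpow_le (continuous_dP x).measurable hC (hfro x)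
    (p := t - 1) (by linarith) (by linarith) hδ
  have hδpow : δ * δ ^ (s + (t - 1)) = δ ^ (s + t) := by
    rw [← Real.rpow_one_add' hδ.le (by linarith)]
    ring_nf
  have htδ : 0 ≤ -t * δ := mul_nonneg (by linarith) hδ.le
  calc riesz t ν x = ∫⁻ y in {y | dP x y ≤ δ}, ENNReal.ofReal (dP x y) ^ t ∂ν +
        ∫⁻ y in {y | δ < dP x y}, ENNReal.ofReal (dP x y) ^ t ∂ν := by
        rw [← hNc, lintegral_add_compl _ hN]; rfl
    _ ≤ ENNReal.ofReal (K₁ * δ ^ (s + t)) +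
        (riesz t ν x' + ENNReal.ofReal (-t * δ) * ENNReal.ofReal (K₂ * δ ^ (s + (t - 1)))) := by
        gcongr
        exact (setLIntegral_far_rpow_le_riesz_add ht x x').trans (by gcongr)
    _ = riesz t ν x' + ENNReal.ofReal ((K₁ + -t * K₂) * δ ^ (s + t)) := by
        rw [← ENNReal.ofReal_mul htδ, add_left_comm, ← ENNReal.ofReal_add
          (mul_nonneg hK₁ (by positivity)) (mul_nonneg htδ (mul_nonneg hK₂ (by positivity)))]
        congr 2
        rw [← hδpow]
        ring

end Riesz

theorem statement17_general (t : ℝ) (ht2 : t < 0)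
    (ν : Measure P1) (hν : IsProbabilityMeasure ν)
    (ζ : ℝ) (hζ1 : 0 < ζ) (hζ2 : ζ < min 1 (frostman ν + t)) :
    (∀ x, riesz t ν x ≠ ⊤) ∧ HolderFn ζ (fun x => (riesz t ν x).toReal) := by
  obtain ⟨hζlt, hζf⟩ := lt_min_iff.1 hζ2
  obtain ⟨s, hζs, hs⟩ : ∃ s, ζ - t < s ∧ s < min (frostman ν) (1 - t) :=
    exists_between (lt_min (by linarith) (by linarith))
  obtain ⟨hsf, hs1⟩ := lt_min_iff.1 hs
  obtain ⟨C, hC, hfro⟩ := exists_frostman_bound (by linarith) hsf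
  have hfin := riesz_ne_top ht2 hC hfro (by linarith)
  obtain ⟨B, hB, hle⟩ := exists_riesz_le_riesz_add ht2 hC hfro (by linarith) (by linarith)
  refine ⟨hfin, B, fun x x' => ?_⟩
  have hδ := dP_nonneg x x'
  calc |(riesz t ν x).toReal - (riesz t ν x').toReal| ≤ B * dP x x' ^ (s + t) :=
        abs_toReal_sub_toReal_le (hfin x) (hfin x') (by positivity) (hle x x')
          (dP_comm x x' ▸ hle x' x)
    _ ≤ B * dP x x' ^ ζ := mul_le_mul_of_nonneg_left
        (Real.rpow_le_rpow_of_exponent_ge' hδ (dP_le_one x x') hζ1.le (by linarith)) hB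

/-- If `dim_F ν > -t` then the Riesz potential `I_{t,ν}` is finite everywhere
and `ζ`-Hölder for every `0 < ζ < min{1, dim_F ν + t}`. -/
theorem statement17 (t : ℝ) (ht1 : -1 < t) (ht2 : t < 0)
    (ν : Measure P1) (hν : IsProbabilityMeasure ν) (hdim : -t < frostman ν)
    (ζ : ℝ) (hζ1 : 0 < ζ) (hζ2 : ζ < min 1 (frostman ν + t)) :
    (∀ x, riesz t ν x ≠ ⊤) ∧ HolderFn ζ (fun x => (riesz t ν x).toReal) :=
  statement17_general t ht2 ν hν ζ hζ1 hζ2
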